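/- Let A : (0,∞) → (0,∞) be continuous, integrable in a neighborhood of zero but not integrable in a neighborhood of infinity, and let ε > 0. Then the shifted function A_ε : t ↦ A(t + ε) also satisfies these hypotheses, and for all t ≥ 0 one has Φ_{A_ε}(t) = Φ_A(t + ε) / Φ_A(ε). -/

import Mathlib

/-!
`t ↦ Φ (t + ε) / Φ ε` solves the shifted equation with initial value `1`, so everything rests on
uniqueness of bounded solutions and on `Φ ε ≠ 0`. Both follow from a maximum principle: since
`A ≥ 0`, a solution of `h'' = A h` is convex on every interval where it is positive, so once it
becomes positive after a nonpositive value it can neither return to `≤ 0` nor stay bounded.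
Hence a solution that is bounded above and `≤ 0` at `0` stays `≤ 0`. Applied to differences this
gives uniqueness, applied to `-Φ` it gives `Φ ≥ 0`; a zero of `Φ` is then a double zero, and
uniqueness for the linear system `(h, h')' = (h', A h)` forces `Φ ≡ 0`, contradicting `Φ 0 = 1`.
-/

open MeasureTheory Filter Set

/-- Hypotheses on the coefficient `A` of the Sturm–Liouville equation: continuous and
strictly positive on `(0,∞)`, integrable in a neighborhood of zero, but not integrable
in a neighborhood of infinity. -/
def SLHyp (A : ℝ → ℝ) : Prop :=
  ContinuousOn A (Set.Ioi 0) ∧ (∀ t > (0:ℝ), 0 < A t) ∧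
  MeasureTheory.IntegrableOn A (Set.Ioc 0 1) ∧
  (∫⁻ t in Set.Ici (1:ℝ), ENNReal.ofReal (A t)) = ⊤

/-- `Φ` is a bounded continuous function on `[0,∞)` with `Φ 0 = 1`, twice differentiable on
`(0,∞)` and satisfying the Sturm–Liouville equation `Φ'' = A Φ` there. -/
def IsSL (A Φ : ℝ → ℝ) : Prop :=
  ContinuousOn Φ (Set.Ici 0) ∧
  (∃ M : ℝ, ∀ t ≥ (0:ℝ), |Φ t| ≤ M) ∧
  Φ 0 = 1 ∧
  (∀ t > (0:ℝ), DifferentiableAt ℝ Φ t) ∧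
  (∀ t > (0:ℝ), HasDerivAt (deriv Φ) (A t * Φ t) t)

open Topology

theorem SLHyp.comp_add_const {A : ℝ → ℝ} (hA : SLHyp A) {ε : ℝ} (hε : 0 < ε) :
    SLHyp (fun t => A (t + ε)) := by
  obtain ⟨hc, hpos, -, hinf⟩ := hA
  have hc' : ContinuousOn (fun t => A (t + ε)) (Ici 0) :=
    hc.comp (continuous_add_const ε).continuousOn fun t (ht : 0 ≤ t) => by
      simp only [mem_Ioi]; linarith
  refine ⟨hc'.mono Ioi_subset_Ici_self, fun t ht => hpos _ (by linarith),
    ((hc'.mono Icc_subset_Ici_self).integrableOn_Icc).mono_set Ioc_subset_Icc_self, ?_⟩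
  have hshift : ∫⁻ t in Ici 1, ENNReal.ofReal (A (t + ε)) =
      ∫⁻ t in Ici (1 + ε), ENNReal.ofReal (A t) := by
    simpa only [preimage_add_const_Ici, add_sub_cancel_right] using
      (measurePreserving_add_right volume ε).setLIntegral_comp_preimage_emb
        (measurableEmbedding_addRight ε) (fun t => ENNReal.ofReal (A t)) (Ici (1 + ε))
  have hc₁ : ContinuousOn A (Icc 1 (1 + ε)) := hc.mono fun t ht => zero_lt_one.trans_le ht.1
  have hfin : ∫⁻ t in Ico 1 (1 + ε), ENNReal.ofReal (A t) < ⊤ :=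
    (hc₁.integrableOn_Icc.mono_set Ico_subset_Icc_self).lintegral_lt_top
  rw [← Ico_union_Ici_eq_Ici (by linarith : (1:ℝ) ≤ 1 + ε),
    lintegral_union measurableSet_Ici
      ((Iio_disjoint_Ici le_rfl).mono_left Ico_subset_Iio_self)] at hinf
  show ∫⁻ t in Ici 1, ENNReal.ofReal (A (t + ε)) = ⊤
  rw [hshift]
  exact (ENNReal.add_eq_top.1 hinf).resolve_left hfin.ne

theorem exists_last_nonpos {f : ℝ → ℝ} {a b : ℝ} (hab : a ≤ b)
    (hf : ContinuousOn f (Icc a b)) (ha : f a ≤ 0) (hb : 0 < f b) :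
    ∃ s ∈ Ico a b, f s ≤ 0 ∧ ∀ x ∈ Ioc s b, 0 < f x := by
  set S := Icc a b ∩ f ⁻¹' Iic 0
  have hS : BddAbove S := ⟨b, fun x hx => hx.1.2⟩
  have hsS : sSup S ∈ S :=
    (hf.preimage_isClosed_of_isClosed isClosed_Icc isClosed_Iic).csSup_mem
      ⟨a, ⟨le_rfl, hab⟩, ha⟩ hS
  refine ⟨sSup S, ⟨hsS.1.1, hsS.1.2.lt_of_ne ?_⟩, hsS.2, fun x hx => ?_⟩
  · rintro hsb
    exact (hsS.2.trans_lt (hsb ▸ hb)).false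
  · by_contra! hx0
    exact (le_csSup hS ⟨⟨hsS.1.1.trans hx.1.le, hx.2⟩, hx0⟩).not_gt hx.1

theorem exists_first_nonpos {f : ℝ → ℝ} {a b : ℝ} (hab : a ≤ b)
    (hf : ContinuousOn f (Icc a b)) (ha : 0 < f a) (hb : f b ≤ 0) :
    ∃ u ∈ Ioc a b, f u ≤ 0 ∧ ∀ x ∈ Ico a u, 0 < f x := by
  set S := Icc a b ∩ f ⁻¹' Iic 0
  have hS : BddBelow S := ⟨a, fun x hx => hx.1.1⟩
  have huS : sInf S ∈ S :=
    (hf.preimage_isClosed_of_isClosed isClosed_Icc isClosed_Iic).csInf_mem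
      ⟨b, ⟨hab, le_rfl⟩, hb⟩ hS
  refine ⟨sInf S, ⟨huS.1.1.lt_of_ne ?_, huS.1.2⟩, huS.2, fun x hx => ?_⟩
  · rintro hau
    exact (huS.2.trans_lt (hau ▸ ha)).false
  · by_contra! hx0
    exact (csInf_le hS ⟨⟨hx.1, hx.2.le.trans huS.1.2⟩, hx0⟩).not_gt hx.2

theorem ConvexOn.mul_sub_le_of_left_nonpos {f : ℝ → ℝ} {a b c : ℝ}
    (hf : ConvexOn ℝ (Icc a c) f) (hab : a < b) (hbc : b < c) (ha : f a ≤ 0) :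
    f b * (c - a) ≤ (b - a) * f c := by
  have hslope := hf.slope_mono_adjacent (left_mem_Icc.2 (hab.trans hbc).le)
    (right_mem_Icc.2 (hab.trans hbc).le) hab hbc
  rw [div_le_div_iff₀ (sub_pos.2 hab) (sub_pos.2 hbc)] at hslope
  nlinarith

/-- The first derivative is carried explicitly, so that sums and shifts of solutions need no
`deriv` bookkeeping. -/
def IsSLSolution (A h : ℝ → ℝ) : Prop :=
  ∃ h' : ℝ → ℝ, (∀ t > 0, HasDerivAt h (h' t) t) ∧
    ∀ t > 0, HasDerivAt h' (A t * h t) t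

theorem IsSL.isSLSolution {A Φ : ℝ → ℝ} (hΦ : IsSL A Φ) : IsSLSolution A Φ :=
  ⟨deriv Φ, fun t ht => (hΦ.2.2.2.1 t ht).hasDerivAt, hΦ.2.2.2.2⟩

namespace IsSLSolution

variable {A h g : ℝ → ℝ}

theorem isSL (hh : IsSLSolution A h) (hc : ContinuousOn h (Ici 0))
    (hb : ∃ M : ℝ, ∀ t ≥ 0, |h t| ≤ M) (h0 : h 0 = 1) : IsSL A h := by
  obtain ⟨h', hd, hd2⟩ := hh
  have hderiv : EqOn (deriv h) h' (Ioi 0) := fun t ht => (hd t ht).deriv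
  exact ⟨hc, hb, h0, fun t ht => (hd t ht).differentiableAt,
    fun t ht => (hd2 t ht).congr_of_eventuallyEq
      (eventuallyEq_of_mem (Ioi_mem_nhds ht) hderiv)⟩

theorem sub (hh : IsSLSolution A h) (hg : IsSLSolution A g) :
    IsSLSolution A (fun t => h t - g t) := by
  obtain ⟨h', hh1, hh2⟩ := hh
  obtain ⟨g', hg1, hg2⟩ := hg
  refine ⟨fun t => h' t - g' t, fun t ht => (hh1 t ht).sub (hg1 t ht), fun t ht => ?_⟩
  exact ((hh2 t ht).sub (hg2 t ht)).congr_deriv (mul_sub _ _ _).symm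

theorem neg (hh : IsSLSolution A h) : IsSLSolution A (fun t => -h t) := by
  obtain ⟨h', hh1, hh2⟩ := hh
  refine ⟨fun t => -h' t, fun t ht => (hh1 t ht).neg, fun t ht => ?_⟩
  exact (hh2 t ht).neg.congr_deriv (mul_neg _ _).symm

theorem div_const (hh : IsSLSolution A h) (c : ℝ) : IsSLSolution A (fun t => h t / c) := by
  obtain ⟨h', hh1, hh2⟩ := hh
  refine ⟨fun t => h' t / c, fun t ht => (hh1 t ht).div_const c, fun t ht => ?_⟩
  exact ((hh2 t ht).div_const c).congr_deriv (mul_div_assoc _ _ _)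

theorem comp_add_const (hh : IsSLSolution A h) {ε : ℝ} (hε : 0 ≤ ε) :
    IsSLSolution (fun t => A (t + ε)) (fun t => h (t + ε)) := by
  obtain ⟨h', hh1, hh2⟩ := hh
  exact ⟨fun t => h' (t + ε), fun t ht => (hh1 _ (by linarith)).comp_add_const t ε,
    fun t ht => (hh2 _ (by linarith)).comp_add_const t ε⟩

theorem convexOn_Icc (hA : ∀ t > 0, 0 ≤ A t) (hh : IsSLSolution A h) {a b : ℝ} (ha : 0 ≤ a)
    (hc : ContinuousOn h (Icc a b)) (hpos : ∀ t ∈ Ioo a b, 0 < h t) :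
    ConvexOn ℝ (Icc a b) h := by
  obtain ⟨h', hd, hd2⟩ := hh
  refine convexOn_of_hasDerivWithinAt2_nonneg (f' := h') (f'' := fun t => A t * h t)
    (convex_Icc a b) hc ?_ ?_ ?_ <;>
    rw [interior_Icc] <;> intro t ht <;> have ht0 : 0 < t := ha.trans_lt ht.1
  · exact (hd t ht0).hasDerivWithinAt
  · exact (hd2 t ht0).hasDerivWithinAt
  · exact mul_nonneg (hA t ht0) (hpos t ht).le

theorem nonpos_of_bddAbove (hA : ∀ t > 0, 0 ≤ A t) (hh : IsSLSolution A h)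
    (hc : ContinuousOn h (Ici 0)) (hb : BddAbove (h '' Ici 0)) (h0 : h 0 ≤ 0) :
    ∀ t ≥ 0, h t ≤ 0 := by
  obtain ⟨M, hM⟩ := hb
  have hM' : ∀ t ≥ 0, h t ≤ M := fun t ht => hM (mem_image_of_mem h ht)
  intro t₀ ht₀
  by_contra! hpos
  obtain ⟨s, hs_mem, hs_nonpos, hs_pos⟩ :=
    exists_last_nonpos ht₀ (hc.mono Icc_subset_Ici_self) h0 hpos
  have hst : 0 < t₀ - s := sub_pos.2 hs_mem.2
  have hgrowth : ∀ u, t₀ < u → (∀ x ∈ Ioo s u, 0 < h x) →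
      h t₀ * (u - s) ≤ (t₀ - s) * h u :=
    fun u hu hpos_u => (hh.convexOn_Icc hA hs_mem.1
      (hc.mono fun x hx => hs_mem.1.trans hx.1) hpos_u).mul_sub_le_of_left_nonpos
      hs_mem.2 hu hs_nonpos
  -- where the linear growth forced by convexity would exceed the bound `M`
  set t₁ := s + (t₀ - s) * (M + 1) / h t₀
  have ht₁ : h t₀ * (t₁ - s) = (t₀ - s) * (M + 1) := by
    simp only [t₁]; field_simp; ring
  have ht₀₁ : t₀ < t₁ := by
    have := hM' t₀ ht₀
    nlinarith
  by_cases hall : ∀ x ∈ Ioo s t₁, 0 < h x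
  · have := hgrowth t₁ ht₀₁ hall
    have := hM' t₁ (by linarith [hs_mem.1])
    nlinarith
  · push Not at hall
    obtain ⟨x, hx, hx0⟩ := hall
    have hx₀ : t₀ < x := by
      by_contra! hle
      exact (hs_pos x ⟨hx.1, hle⟩).not_ge hx0
    obtain ⟨u, hu, hu0, hu_pos⟩ :=
      exists_first_nonpos hx₀.le (hc.mono fun y hy => ht₀.trans hy.1) hpos hx0
    have hpos_u : ∀ y ∈ Ioo s u, 0 < h y := fun y hy =>
      (le_or_gt y t₀).elim (fun hy₀ => hs_pos y ⟨hy.1, hy₀⟩)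
        fun hy₀ => hu_pos y ⟨hy₀.le, hy.2⟩
    have := hgrowth u hu.1 hpos_u
    nlinarith [hu.1]

theorem eqOn_zero_of_hasDerivAt_zero (hAc : ContinuousOn A (Ioi 0)) (hh : IsSLSolution A h)
    {b : ℝ} (hb : 0 < b) (hhb : h b = 0) (hdb : HasDerivAt h 0 b) : EqOn h 0 (Ioi 0) := by
  obtain ⟨h', hd, hd2⟩ := hh
  intro x (hx : 0 < x)
  set a := min x b / 2
  set c := max x b + 1
  have ha : 0 < a := by positivity
  have hsub : Icc a c ⊆ Ioi 0 := fun t ht => ha.trans_le ht.1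
  -- `A` is bounded on the compact `[a, c] ⊆ (0, ∞)`, so the system is Lipschitz there
  obtain ⟨C, hC⟩ := isCompact_Icc.exists_bound_of_continuousOn (hAc.mono hsub)
  set v : ℝ → ℝ × ℝ → ℝ × ℝ := fun t p => (p.2, A t * p.1)
  have hlip : ∀ t ∈ Ioo a c, LipschitzOnWith (max 1 C.toNNReal) (v t) univ := by
    intro t ht
    refine (LipschitzWith.prod_snd.prodMk ?_).lipschitzOnWith
    refine ((lipschitzWith_smul (A t)).comp LipschitzWith.prod_fst).weaken ?_
    rw [mul_one, ← NNReal.coe_le_coe, coe_nnnorm, Real.coe_toNNReal']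
    exact (hC t (Ioo_subset_Icc_self ht)).trans (le_max_left _ _)
  have hsol : ∀ t ∈ Icc a c, HasDerivAt (fun t => (h t, h' t)) (v t (h t, h' t)) t :=
    fun t ht => (hd t (hsub ht)).prodMk (hd2 t (hsub ht))
  have hzero : ∀ t ∈ Ioo a c, HasDerivAt (fun _ => ((0 : ℝ), (0 : ℝ))) (v t (0, 0)) t :=
    fun t _ => (hasDerivAt_const t _).congr_deriv (by simp [v]; rfl)
  have hb_mem : b ∈ Ioo a c := ⟨by simp only [a]; linarith [min_le_right x b],
    by simp only [c]; linarith [le_max_right x b]⟩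
  have hx_mem : x ∈ Icc a c := ⟨by simp only [a]; linarith [min_le_left x b],
    by simp only [c]; linarith [le_max_left x b]⟩
  have heq := ODE_solution_unique_of_mem_Icc hlip hb_mem (HasDerivAt.continuousOn hsol)
    (fun t ht => hsol t (Ioo_subset_Icc_self ht)) (fun _ _ => mem_univ _)
    continuousOn_const hzero (fun _ _ => mem_univ _)
    (by rw [hhb, hdb.unique (hd b hb)]) hx_mem
  exact congrArg Prod.fst heq

end IsSLSolution

namespace IsSL

variable {A Φ : ℝ → ℝ}

theorem eqOn {Ψ : ℝ → ℝ} (hA : ∀ t > 0, 0 ≤ A t) (hΦ : IsSL A Φ) (hΨ : IsSL A Ψ) :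
    EqOn Φ Ψ (Ici 0) := by
  have hle : ∀ {F G : ℝ → ℝ}, IsSL A F → IsSL A G → ∀ t ≥ 0, F t ≤ G t := by
    intro F G hF hG t ht
    obtain ⟨MF, hMF⟩ := hF.2.1
    obtain ⟨MG, hMG⟩ := hG.2.1
    have hbdd : BddAbove ((fun t => F t - G t) '' Ici 0) :=
      ⟨MF + MG, forall_mem_image.2 fun t (ht : 0 ≤ t) => by
        linarith [(abs_le.1 (hMF t ht)).2, (abs_le.1 (hMG t ht)).1]⟩
    refine sub_nonpos.1 ((hF.isSLSolution.sub hG.isSLSolution).nonpos_of_bddAbove hA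
      (hF.1.sub hG.1) hbdd ?_ t ht)
    simp only [hF.2.2.1, hG.2.2.1, sub_self, le_refl]
  exact fun t ht => le_antisymm (hle hΦ hΨ t ht) (hle hΨ hΦ t ht)

theorem nonneg (hA : ∀ t > 0, 0 ≤ A t) (hΦ : IsSL A Φ) : ∀ t ≥ 0, 0 ≤ Φ t := by
  obtain ⟨M, hM⟩ := hΦ.2.1
  have hbdd : BddAbove ((fun t => -Φ t) '' Ici 0) :=
    ⟨M, forall_mem_image.2 fun t (ht : 0 ≤ t) => (neg_le_abs _).trans (hM t ht)⟩
  refine fun t ht => neg_nonpos.1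
    (hΦ.isSLSolution.neg.nonpos_of_bddAbove hA hΦ.1.neg hbdd ?_ t ht)
  simp [hΦ.2.2.1]

theorem pos (hAc : ContinuousOn A (Ioi 0)) (hA : ∀ t > 0, 0 ≤ A t) (hΦ : IsSL A Φ) :
    ∀ t ≥ 0, 0 < Φ t := by
  have h0 : Φ 0 = 1 := hΦ.2.2.1
  have hnonneg := hΦ.nonneg hA
  intro b hb
  refine (hnonneg b hb).lt_of_ne' fun hΦb => ?_
  have hb0 : 0 < b := hb.lt_of_ne (by rintro rfl; simp [h0] at hΦb)
  obtain ⟨Φ', hd, -⟩ := hΦ.isSLSolution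
  have hmin : IsLocalMin Φ b := by
    filter_upwards [Ioi_mem_nhds hb0] with x hx
    exact hΦb ▸ hnonneg x hx.le
  have hdb : HasDerivAt Φ 0 b := hmin.hasDerivAt_eq_zero (hd b hb0) ▸ hd b hb0
  have hvanish := hΦ.isSLSolution.eqOn_zero_of_hasDerivAt_zero hAc hb0 hΦb hdb
  have hto1 : Tendsto Φ (𝓝[>] 0) (𝓝 1) :=
    h0 ▸ (hΦ.1 0 self_mem_Ici).mono_left (nhdsWithin_mono _ Ioi_subset_Ici_self)
  have hto0 : Tendsto Φ (𝓝[>] 0) (𝓝 0) :=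
    tendsto_const_nhds.congr' (eventuallyEq_nhdsWithin_of_eqOn hvanish).symm
  exact one_ne_zero (tendsto_nhds_unique hto1 hto0)

theorem comp_add_const_div (hΦ : IsSL A Φ) {ε : ℝ} (hε : 0 ≤ ε) (hΦε : Φ ε ≠ 0) :
    IsSL (fun t => A (t + ε)) (fun t => Φ (t + ε) / Φ ε) := by
  obtain ⟨M, hM⟩ := hΦ.2.1
  refine ((hΦ.isSLSolution.comp_add_const hε).div_const (Φ ε)).isSL ?_
    ⟨M / |Φ ε|, fun t ht => ?_⟩ (by simp only [zero_add, div_self hΦε])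
  · refine (hΦ.1.comp (continuous_add_const ε).continuousOn
      fun t (ht : 0 ≤ t) => ?_).div_const _
    simp only [mem_Ici]
    linarith
  · rw [abs_div]
    exact div_le_div_of_nonneg_right (hM _ (by linarith)) (abs_nonneg _)

end IsSL

theorem shifted_sturm_liouville_solution (A Φ : ℝ → ℝ) (hA : SLHyp A) (hΦ : IsSL A Φ)
    (ε : ℝ) (hε : 0 < ε) :
    SLHyp (fun t => A (t + ε)) ∧
    ∀ Ψ : ℝ → ℝ, IsSL (fun t => A (t + ε)) Ψ →
      ∀ t ≥ (0:ℝ), Ψ t = Φ (t + ε) / Φ ε := by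
  refine ⟨hA.comp_add_const hε, fun Ψ hΨ t ht => ?_⟩
  have hA₀ : ∀ t > 0, 0 ≤ A t := fun t ht => (hA.2.1 t ht).le
  have hΦε : 0 < Φ ε := hΦ.pos hA.1 hA₀ ε hε.le
  exact hΨ.eqOn (fun t ht => hA₀ _ (by linarith)) (hΦ.comp_add_const_div hε.le hΦε.ne') ht
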